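/- Let 𝔊 and 𝔊' be two mDAGs on the same node set V, and suppose nodes u and v are adjacent in the skeleton of 𝔊' but not in the skeleton of 𝔊. Then the e-separation relation u ⊥e v | ∅ ¬(V∖{u,v}) holds in 𝔊 but fails in 𝔊'. (Hence any observational nondominance demonstrable by comparison of skeletons is also demonstrable by comparison of e-separation relations.) -/

import Mathlib

open scoped Classical

/-! ## Basic structures: pDAGs and mDAGs -/

/-- A partitioned directed acyclic graph (pDAG) with visible node type `V` and
latent node type `L`.  Acyclicity is phrased via the existence of a topological
rank function, which for finite graphs is equivalent to the absence of directed
cycles. -/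
structure pDAG (V L : Type) where
  edge : V ⊕ L → V ⊕ L → Prop
  acyclic : ∃ rank : V ⊕ L → ℕ, ∀ a b, edge a b → rank a < rank b

/-- `P` is a probability distribution on a finite type. -/
def IsDist {α : Type} [Fintype α] (P : α → ℝ) : Prop :=
  (∀ x, 0 ≤ P x) ∧ ∑ x, P x = 1

/-- The joint assignment of outcomes to all (visible and latent) nodes obtained
from an assignment `xv` to the visible nodes and `xl` to the latent nodes. -/
def jointVal {V L : Type} (c : V → ℕ) (k : L → ℕ)
    (xv : (v : V) → Fin (c v)) (xl : (l : L) → Fin (k l)) :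
    (a : V ⊕ L) → Fin (Sum.elim c k a)
  | Sum.inl v => xv v
  | Sum.inr l => xl l

/-- A probability distribution `P` over the visible variables (with cardinalities `c`)
is realizable by the pDAG `G` (with classical unrestricted semantics, arbitrary finite
cardinalities of the latent variables) if there are latent cardinalities `k`, error
cardinalities `e`, error distributions `PE` and functions `f` (each depending only on
the values of the parents and the local error variable) whose induced marginal on the
visible variables is `P`. -/
def pDAG.Realizable {V L : Type} [Fintype V] [Fintype L] [DecidableEq V] [DecidableEq L]
    (G : pDAG V L) (c : V → ℕ) (P : ((v : V) → Fin (c v)) → ℝ) : Prop :=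
  IsDist P ∧
  ∃ (k : L → ℕ) (e : V ⊕ L → ℕ)
    (PE : (a : V ⊕ L) → Fin (e a) → ℝ)
    (f : (a : V ⊕ L) → ((b : V ⊕ L) → Fin (Sum.elim c k b)) → Fin (e a) →
      Fin (Sum.elim c k a)),
    (∀ a, IsDist (PE a)) ∧
    (∀ a g g' ε, (∀ b, G.edge b a → g b = g' b) → f a g ε = f a g' ε) ∧
    ∀ xv : (v : V) → Fin (c v),
      P xv = ∑ xl : (l : L) → Fin (k l), ∑ ε : (a : V ⊕ L) → Fin (e a),
        ∏ a : V ⊕ L,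
          (if jointVal c k xv xl a = f a (jointVal c k xv xl) (ε a) then (1:ℝ) else 0)
            * PE a (ε a)

/-- `G` observationally dominates `G'`: for every assignment of finite cardinalities to
the visible variables, every distribution realizable by `G'` is realizable by `G`. -/
def pDAG.ObsDominates {V L L' : Type} [Fintype V] [Fintype L] [Fintype L']
    [DecidableEq V] [DecidableEq L] [DecidableEq L']
    (G : pDAG V L) (G' : pDAG V L') : Prop :=
  ∀ (c : V → ℕ) (P : ((v : V) → Fin (c v)) → ℝ), G'.Realizable c P → G.Realizable c P

/-- An mDAG: a DAG on the node type `V` together with a simplicial complex on `V`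
(a family of finite subsets containing all singletons and closed under subsets). -/
structure mDAG (V : Type) where
  edge : V → V → Prop
  acyclic : ∃ rank : V → ℕ, ∀ a b, edge a b → rank a < rank b
  faces : Finset (Finset V)
  singleton_mem : ∀ v : V, {v} ∈ faces
  down_closed : ∀ A B : Finset V, A ⊆ B → B ∈ faces → A ∈ faces

namespace mDAG

variable {V : Type}

/-- A facet is an inclusion-maximal face of the simplicial complex. -/
def IsFacet (G : mDAG V) (A : Finset V) : Prop :=
  A ∈ G.faces ∧ ∀ B ∈ G.faces, A ⊆ B → A = B

/-- An mDAG is confounder-free if every facet of its simplicial complex is a singleton. -/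
def ConfounderFree (G : mDAG V) : Prop :=
  ∀ A : Finset V, G.IsFacet A → ∃ v : V, A = {v}

/-- An mDAG is directed-edge-free if its directed structure has no edges. -/
def DirectedEdgeFree (G : mDAG V) : Prop :=
  ∀ a b : V, ¬ G.edge a b

/-- `G` structurally dominates `G'` if the directed edges of `G'` are a subset of those
of `G` and the simplicial complex of `G'` is contained in that of `G`. -/
def StructDominates (G G' : mDAG V) : Prop :=
  (∀ a b : V, G'.edge a b → G.edge a b) ∧ G'.faces ⊆ G.faces

/-- The type of facets of an mDAG. -/
def Facets (G : mDAG V) : Type := {A : Finset V // G.IsFacet A}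

noncomputable instance instFintypeFacets [Fintype V] [DecidableEq V] (G : mDAG V) :
    Fintype G.Facets := Subtype.fintype _

noncomputable instance instDecidableEqFacets (G : mDAG V) :
    DecidableEq G.Facets := Classical.decEq _

/-- The canonical pDAG of an mDAG: the visible nodes carry the directed structure, and
there is one exogenous latent node per facet, whose children are exactly the members
of that facet. -/
def canon (G : mDAG V) : pDAG V G.Facets where
  edge a b :=
    match a, b with
    | Sum.inl u, Sum.inl v => G.edge u v
    | Sum.inr A, Sum.inl v => v ∈ A.1
    | _, Sum.inr _ => False
  acyclic := by
    obtain ⟨r, hr⟩ := G.acyclic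
    refine ⟨Sum.elim (fun v => r v + 1) (fun _ => 0), ?_⟩
    rintro (u | A) (v | B) h
    · simpa using hr u v h
    · exact h.elim
    · simp
    · exact h.elim

/-- Realizability of a distribution over the visible variables by an mDAG (via its
canonical pDAG). -/
def Realizable [Fintype V] [DecidableEq V] (G : mDAG V) (c : V → ℕ)
    (P : ((v : V) → Fin (c v)) → ℝ) : Prop :=
  G.canon.Realizable c P

/-- Observational dominance of mDAGs: for every assignment of finite cardinalities to
the visible nodes, every distribution realizable by `G'` is realizable by `G`. -/
def ObsDominates [Fintype V] [DecidableEq V] (G G' : mDAG V) : Prop :=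
  ∀ (c : V → ℕ) (P : ((v : V) → Fin (c v)) → ℝ), G'.Realizable c P → G.Realizable c P

/-- Observational equivalence of mDAGs. -/
def ObsEquiv [Fintype V] [DecidableEq V] (G G' : mDAG V) : Prop :=
  ∀ (c : V → ℕ) (P : ((v : V) → Fin (c v)) → ℝ), G.Realizable c P ↔ G'.Realizable c P

/-- Consistency with the fixed nodal ordering given by the order on `V`:
a later node is never an ancestor of an earlier node. -/
def OrderConsistent [LT V] (G : mDAG V) : Prop :=
  ∀ i j : V, i < j → ¬ Relation.TransGen G.edge j i

/-- `G'` is obtained from `G` by relabelling the nodes with the permutation `π`. -/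
def IsRelabel (π : Equiv.Perm V) (G G' : mDAG V) : Prop :=
  (∀ a b : V, G'.edge (π a) (π b) ↔ G.edge a b) ∧
  G'.faces = G.faces.image (Finset.image π)

/-- Adjacency in the skeleton of an mDAG: a directed edge in either direction, or
joint membership in some face of the simplicial complex. -/
def skelAdj (G : mDAG V) (u w : V) : Prop :=
  G.edge u w ∨ G.edge w u ∨ ∃ A ∈ G.faces, u ∈ A ∧ w ∈ A

end mDAG

/-! ## d-separation and e-separation -/

/-- Undirected adjacency underlying a directed graph. -/
def AdjRel {N : Type} (E : N → N → Prop) (a b : N) : Prop := E a b ∨ E b a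

/-- The middle node `y` of a consecutive triple `(x, y, z)` of a path does not block the
path given the conditioning set `C`: if `y` is a collider it has a descendant in `C`
(possibly itself), and if it is a non-collider it is not in `C`. -/
def ActiveTriple {N : Type} (E : N → N → Prop) (C : Set N) (x y z : N) : Prop :=
  ((E x y ∧ E z y) ∧ ∃ d ∈ C, Relation.ReflTransGen E y d) ∨
  (¬(E x y ∧ E z y) ∧ y ∉ C)

/-- Every consecutive triple of the path is active given the conditioning set `C`. -/
def TriplesActive {N : Type} (E : N → N → Prop) (C : Set N) : List N → Prop
  | x :: y :: z :: rest => ActiveTriple E C x y z ∧ TriplesActive E C (y :: z :: rest)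
  | _ => True

/-- `A` and `B` are d-connected given `C`: there is a (repetition-free, undirected)
path from a node of `A` to a node of `B` that is not blocked by `C`. -/
def DConnected {N : Type} (E : N → N → Prop) (A B C : Set N) : Prop :=
  ∃ p : List N, p.Chain' (AdjRel E) ∧ p.Nodup ∧
    (∃ a ∈ A, p.head? = some a) ∧ (∃ b ∈ B, p.getLast? = some b) ∧
    TriplesActive E C p

/-- d-separation: every undirected path from `A` to `B` is blocked by `C`. -/
def DSeparated {N : Type} (E : N → N → Prop) (A B C : Set N) : Prop :=
  ¬ DConnected E A B C

namespace mDAG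

variable {V : Type}

/-- d-separation of sets of (visible) nodes of an mDAG, evaluated in its canonical pDAG. -/
def dsep (G : mDAG V) (A B C : Set V) : Prop :=
  DSeparated G.canon.edge (Sum.inl '' A) (Sum.inl '' B) (Sum.inl '' C)

end mDAG

/-- The edge relation of a pDAG after deletion of the visible nodes in `D`. -/
def delEdge {V L : Type} (E : V ⊕ L → V ⊕ L → Prop) (D : Set V) (a b : V ⊕ L) : Prop :=
  E a b ∧ (∀ v, a = Sum.inl v → v ∉ D) ∧ (∀ v, b = Sum.inl v → v ∉ D)

namespace mDAG

variable {V : Type}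

/-- e-separation: `A` and `B` are e-separated by `C` after deletion of `D` if they are
d-separated by `C` in the subgraph of the canonical pDAG obtained by deleting the nodes
in `D`. -/
def eSep (G : mDAG V) (A B C D : Set V) : Prop :=
  DSeparated (delEdge G.canon.edge D) (Sum.inl '' A) (Sum.inl '' B) (Sum.inl '' C)

end mDAG

/-! ## Conditional independence -/

/-- The probability that the variables in `S` take the values specified by `g`. -/
noncomputable def margProb {V : Type} [Fintype V] [DecidableEq V] (c : V → ℕ)
    (P : ((v : V) → Fin (c v)) → ℝ) (S : Set V) (g : (v : V) → Fin (c v)) : ℝ :=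
  ∑ x : (v : V) → Fin (c v), if ∀ v ∈ S, x v = g v then P x else 0

/-- `X_A ⊥⊥ X_B | X_C` in the distribution `P`:
`P(X_A X_B | X_C) = P(X_A | X_C) P(X_B | X_C)` whenever the conditioning event has
positive probability. -/
def CondIndep {V : Type} [Fintype V] [DecidableEq V] (c : V → ℕ)
    (P : ((v : V) → Fin (c v)) → ℝ) (A B C : Set V) : Prop :=
  ∀ g : (v : V) → Fin (c v), 0 < margProb c P C g →
    margProb c P (A ∪ B ∪ C) g * margProb c P C g
      = margProb c P (A ∪ C) g * margProb c P (B ∪ C) g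

/-! ## Districts, closures and densely connected pairs -/

namespace mDAG

variable {V : Type}

/-- One step of connection through a common face, within the node subset `S`. -/
def faceStep (G : mDAG V) (S : Set V) (x y : V) : Prop :=
  x ∈ S ∧ y ∈ S ∧ ∃ F ∈ G.faces, x ∈ F ∧ y ∈ F

/-- The district of the set `A` in the sub-mDAG induced on `S`. -/
def disIn (G : mDAG V) (S A : Set V) : Set V :=
  {w | ∃ a ∈ A, Relation.ReflTransGen (G.faceStep S) a w}

/-- The ancestors of the set `A` (including `A` itself) in the directed structure
restricted to `S`. -/
def anIn (G : mDAG V) (S A : Set V) : Set V :=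
  {w | ∃ a ∈ A, Relation.ReflTransGen (fun x y => x ∈ S ∧ y ∈ S ∧ G.edge x y) w a}

/-- The alternating sequence of district and ancestor restrictions used to define
the closure of a set of nodes. -/
def closureSeq (G : mDAG V) (A : Set V) : ℕ → Set V
  | 0 => Set.univ
  | n + 1 =>
      if n % 2 = 0 then G.disIn (G.closureSeq A n) A else G.anIn (G.closureSeq A n) A

/-- The closure of a set of nodes: the limit (intersection) of the decreasing
alternating sequence. -/
def closure (G : mDAG V) (A : Set V) : Set V := ⋂ n, G.closureSeq A n

/-- `S` is bidirected-connected: it forms a single district of the induced sub-mDAG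
on `S`. -/
def BidirConnected (G : mDAG V) (S : Set V) : Prop :=
  ∀ u ∈ S, ∀ w ∈ S, Relation.ReflTransGen (G.faceStep S) u w

/-- Two distinct nodes `v`, `w` are densely connected. -/
def DenselyConnected (G : mDAG V) (v w : V) : Prop :=
  (∃ u ∈ G.closure {w}, G.edge v u) ∨
  (∃ u ∈ G.closure {v}, G.edge w u) ∨
  G.BidirConnected (G.closure {v, w})

/-- `S` is a realizable support of the mDAG `G` at cardinalities `c`: some distribution
realizable by `G` at `c` has support exactly `S`. -/
def RealizableSupport [Fintype V] [DecidableEq V] (G : mDAG V) (c : V → ℕ)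
    (S : Set ((v : V) → Fin (c v))) : Prop :=
  ∃ P : ((v : V) → Fin (c v)) → ℝ, G.Realizable c P ∧ ∀ x, x ∈ S ↔ 0 < P x

end mDAG

/-! After deleting every node except `u` and `v`, the canonical pDAG keeps only `u`, `v` and the
latent facet nodes, and latent nodes have no parents. If `u` and `v` are not adjacent in the
skeleton, the set formed by `u` and its latent parents is closed under adjacency, so no path
leaves it and none reaches `v`. Conversely a skeleton adjacency yields either the one-edge
path `u — v` or the fork `u ← F → v` through a facet `F` containing both, whose middle node is
latent and hence never conditioned on. -/

theorem dSeparated_of_adjRel_invariant {N : Type} {E : N → N → Prop} {A B C : Set N}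
    (S : Set N) (hAS : A ⊆ S) (hSB : Disjoint S B)
    (hS : ∀ ⦃x y⦄, AdjRel E x y → x ∈ S → y ∈ S) : DSeparated E A B C := by
  rintro ⟨p, hp, -, ⟨a, ha, hhead⟩, ⟨b, hb, hlast⟩, -⟩
  have hpS : ∀ x ∈ p, x ∈ S := hp.induction (· ∈ S) p hS fun hne => by
    rw [List.head?_eq_some_head hne, Option.some_inj] at hhead
    exact hhead ▸ hAS ha
  exact hSB.ne_of_mem (hpS b (List.mem_of_getLast? hlast)) hb rfl

theorem dConnected_of_adjRel {N : Type} {E : N → N → Prop} {A B C : Set N} {a b : N}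
    (ha : a ∈ A) (hb : b ∈ B) (hab : a ≠ b) (hE : AdjRel E a b) : DConnected E A B C :=
  ⟨[a, b], List.isChain_pair.2 hE, by simpa using hab, ⟨a, ha, rfl⟩, ⟨b, hb, rfl⟩, trivial⟩

theorem dConnected_of_common_parent {N : Type} {E : N → N → Prop} {A B C : Set N}
    {a b c : N} (ha : a ∈ A) (hb : b ∈ B) (hab : a ≠ b) (hac : a ≠ c) (hbc : b ≠ c)
    (hca : E c a) (hcb : E c b) (hnac : ¬ E a c) (hc : c ∉ C) : DConnected E A B C :=
  ⟨[a, c, b], List.isChain_cons_cons.2 ⟨.inr hca, List.isChain_pair.2 (.inl hcb)⟩,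
    by simp [hab, hac, hbc.symm], ⟨a, ha, rfl⟩, ⟨b, hb, rfl⟩,
    ⟨.inr ⟨fun h => hnac h.1, hc⟩, trivial⟩⟩

theorem eq_or_eq_of_adjRel_delEdge_inl {V L : Type} {E : V ⊕ L → V ⊕ L → Prop} {u v w : V}
    {x : V ⊕ L} (h : AdjRel (delEdge E (Set.univ \ {u, v})) x (.inl w)) : w = u ∨ w = v := by
  have hw : w ∉ Set.univ \ {u, v} := h.elim (fun h => h.2.2 w rfl) (fun h => h.2.1 w rfl)
  simpa [or_iff_not_imp_left] using hw

namespace mDAG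

variable {V : Type} (G : mDAG V)

theorem skelAdj_refl (u : V) : G.skelAdj u u :=
  .inr <| .inr ⟨{u}, G.singleton_mem u, Finset.mem_singleton_self u, Finset.mem_singleton_self u⟩

theorem ne_of_not_skelAdj {u v : V} (h : ¬ G.skelAdj u v) : u ≠ v :=
  fun e => h (e ▸ G.skelAdj_refl u)

theorem exists_isFacet_superset {A : Finset V} (hA : A ∈ G.faces) :
    ∃ F, G.IsFacet F ∧ A ⊆ F := by
  obtain ⟨F, hAF, hF⟩ := G.faces.exists_le_maximal hA
  exact ⟨F, ⟨hF.1, fun B hB hFB => le_antisymm hFB (hF.2 hB hFB)⟩, hAF⟩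

theorem not_canon_edge_inr (x : V ⊕ G.Facets) (F : G.Facets) : ¬ G.canon.edge x (.inr F) := by
  cases x <;> exact id

def selfAndLatentParents (u : V) : Set (V ⊕ G.Facets) :=
  {x | Sum.elim (· = u) (fun F => u ∈ F.1) x}

theorem mem_of_adjRel_canon_inr_inl {F : G.Facets} {w : V}
    (h : AdjRel G.canon.edge (.inr F) (.inl w)) : w ∈ F.1 :=
  h.resolve_right (G.not_canon_edge_inr _ _)

theorem adjRel_delEdge_canon_mem_selfAndLatentParents {u v : V} (h : ¬ G.skelAdj u v)
    {x y : V ⊕ G.Facets} (hxy : AdjRel (delEdge G.canon.edge (Set.univ \ {u, v})) x y)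
    (hx : x ∈ G.selfAndLatentParents u) : y ∈ G.selfAndLatentParents u := by
  have hE : AdjRel G.canon.edge x y := hxy.imp And.left And.left
  rcases x with a | F <;> rcases y with b | F'
  · obtain rfl : a = u := hx
    obtain hb | rfl := eq_or_eq_of_adjRel_delEdge_inl hxy
    · exact hb
    · exact absurd (or_assoc.mp (.inl hE)) h
  · exact G.mem_of_adjRel_canon_inr_inl (hx ▸ hE.symm)
  · obtain rfl | rfl := eq_or_eq_of_adjRel_delEdge_inl hxy
    · rfl
    · exact absurd (.inr (.inr ⟨F.1, F.2.1, hx, G.mem_of_adjRel_canon_inr_inl hE⟩)) h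
  · exact (hE.elim (G.not_canon_edge_inr _ _) (G.not_canon_edge_inr _ _)).elim

theorem eSep_of_not_skelAdj {u v : V} (h : ¬ G.skelAdj u v) (C : Set V) :
    G.eSep {u} {v} C (Set.univ \ {u, v}) :=
  dSeparated_of_adjRel_invariant (G.selfAndLatentParents u) (by simp [selfAndLatentParents])
    (by simpa [selfAndLatentParents] using (G.ne_of_not_skelAdj h).symm)
    fun _ _ => G.adjRel_delEdge_canon_mem_selfAndLatentParents h

theorem not_eSep_of_skelAdj {u v : V} (h : G.skelAdj u v) (huv : u ≠ v) (C : Set V) :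
    ¬ G.eSep {u} {v} C (Set.univ \ {u, v}) := by
  have hu : (.inl u : V ⊕ G.Facets) ∈ Sum.inl '' {u} := Set.mem_image_of_mem _ rfl
  have hv : (.inl v : V ⊕ G.Facets) ∈ Sum.inl '' {v} := Set.mem_image_of_mem _ rfl
  have hne : (.inl u : V ⊕ G.Facets) ≠ .inl v := Sum.inl_injective.ne huv
  refine not_not_intro ?_
  rcases h with he | he | ⟨A, hA, huA, hvA⟩
  · exact dConnected_of_adjRel hu hv hne (.inl ⟨he, by simp, by simp⟩)
  · exact dConnected_of_adjRel hu hv hne (.inr ⟨he, by simp, by simp⟩)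
  · obtain ⟨F, hF, hAF⟩ := G.exists_isFacet_superset hA
    exact dConnected_of_common_parent (c := .inr ⟨F, hF⟩) hu hv hne Sum.inl_ne_inr
      Sum.inl_ne_inr ⟨hAF huA, by simp, by simp⟩ ⟨hAF hvA, by simp, by simp⟩
      (fun h => G.not_canon_edge_inr _ _ h.1) (by simp)

end mDAG

theorem skeleton_comparison_subsumed_by_esep_general
    {V : Type} (G G' : mDAG V) (u v : V)
    (h' : G'.skelAdj u v) (h : ¬ G.skelAdj u v) :
    G.eSep {u} {v} ∅ (Set.univ \ {u, v}) ∧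
    ¬ G'.eSep {u} {v} ∅ (Set.univ \ {u, v}) :=
  ⟨G.eSep_of_not_skelAdj h ∅,
    G'.not_eSep_of_skelAdj h' (G.ne_of_not_skelAdj h) ∅⟩

/-- Let `G` and `G'` be two mDAGs on the same node set `V`, and
suppose the nodes `u` and `v` are adjacent in the skeleton of `G'` but not in the
skeleton of `G`.  Then the e-separation relation `u ⊥e v | ∅ ¬(V \ {u,v})` holds in
`G` but fails in `G'`.  (Hence any observational nondominance demonstrable by
comparison of skeletons is also demonstrable by comparison of e-separation
relations.) -/
theorem skeleton_comparison_subsumed_by_esep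
    {V : Type} [Fintype V] [DecidableEq V] (G G' : mDAG V) (u v : V)
    (h' : G'.skelAdj u v) (h : ¬ G.skelAdj u v) :
    G.eSep {u} {v} ∅ (Set.univ \ {u, v}) ∧
    ¬ G'.eSep {u} {v} ∅ (Set.univ \ {u, v}) :=
  skeleton_comparison_subsumed_by_esep_general G G' u v h' h
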